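/- Let ξ_t be a sequence of random variables, each supported on a common finite set S ⊂ ℝ, with probability mass functions p_t : S → [0,1], and suppose p_t converges pointwise to a probability mass function p on S, with limiting random variable ξ distributed by p. Then for α ∈ (0,1), CVaR_α(ξ_t) → CVaR_α(ξ) as t → ∞. Moreover, |CVaR_α(ξ_t) − CVaR_α(ξ)| ≤ ((U−L)/(1−α)) · Σ_{s∈S} |p_t(s) − p(s)|, where L = min S and U = max S. -/

import Mathlib

/-!
For every fixed `y`, the CVaR objective `y + (1 - α)⁻¹ ∑ q(s) (s - y)⁺` is linear in the pmf `q`,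
and on `[L, U]` each weight `(s - y)⁺` lies in `[0, U - L]`. Hence two pmfs give objectives that
differ uniformly by at most `(U - L)/(1 - α) · ‖p - q‖₁`, and so do their minima over `[L, U]`.
Convergence in distribution then follows by squeezing.
-/

open Filter

/-- CVaR at level `α` of the distribution on the finite support `S` with pmf `q`. -/
noncomputable def finCVaR (S : Finset ℝ) (hS : S.Nonempty) (α : ℝ) (q : ℝ → ℝ) : ℝ :=
  sInf ((fun y => y + (1 / (1 - α)) * ∑ s ∈ S, q s * max (s - y) 0) ''
    Set.Icc (S.min' hS) (S.max' hS))

section InfImage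

variable {K : Set ℝ} {f g : ℝ → ℝ} {ε : ℝ}

lemma csInf_image_le_csInf_image_add (hK : K.Nonempty) (hf : BddBelow (f '' K))
    (h : ∀ y ∈ K, f y ≤ g y + ε) : sInf (f '' K) ≤ sInf (g '' K) + ε := by
  rw [← sub_le_iff_le_add]
  refine le_csInf (hK.image g) ?_
  rintro _ ⟨y, hy, rfl⟩
  linarith [csInf_le hf ⟨y, hy, rfl⟩, h y hy]

lemma abs_csInf_image_sub_csInf_image_le (hK : K.Nonempty) (hf : BddBelow (f '' K))
    (hg : BddBelow (g '' K)) (h : ∀ y ∈ K, |f y - g y| ≤ ε) :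
    |sInf (f '' K) - sInf (g '' K)| ≤ ε := by
  rw [abs_sub_le_iff]
  constructor
  · linarith [csInf_image_le_csInf_image_add (g := g) (ε := ε) hK hf fun y hy => by
      linarith [(abs_sub_le_iff.mp (h y hy)).1]]
  · linarith [csInf_image_le_csInf_image_add (g := f) (ε := ε) hK hg fun y hy => by
      linarith [(abs_sub_le_iff.mp (h y hy)).2]]

end InfImage

section Objective

variable (S : Finset ℝ) (α : ℝ)

noncomputable def cvarObjective (q : ℝ → ℝ) (y : ℝ) : ℝ :=
  y + (1 / (1 - α)) * ∑ s ∈ S, q s * max (s - y) 0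

lemma finCVaR_eq_sInf_cvarObjective (hS : S.Nonempty) (q : ℝ → ℝ) :
    finCVaR S hS α q = sInf (cvarObjective S α q '' Set.Icc (S.min' hS) (S.max' hS)) :=
  rfl

@[fun_prop]
lemma continuous_cvarObjective (q : ℝ → ℝ) : Continuous (cvarObjective S α q) := by
  unfold cvarObjective
  fun_prop

lemma abs_cvarObjective_sub_le {α : ℝ} (hα : α < 1) (p q : ℝ → ℝ) {y M : ℝ} (hM : 0 ≤ M)
    (hy : ∀ s ∈ S, s - y ≤ M) :
    |cvarObjective S α p y - cvarObjective S α q y| ≤ (M / (1 - α)) * ∑ s ∈ S, |p s - q s| := by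
  have hc : 0 < 1 / (1 - α) := by
    have : 0 < 1 - α := by linarith
    positivity
  have hdiff : cvarObjective S α p y - cvarObjective S α q y =
      1 / (1 - α) * ∑ s ∈ S, (p s - q s) * max (s - y) 0 := by
    simp only [cvarObjective, sub_mul, Finset.sum_sub_distrib]
    ring
  have hsum : |∑ s ∈ S, (p s - q s) * max (s - y) 0| ≤ ∑ s ∈ S, |p s - q s| * M := by
    refine (Finset.abs_sum_le_sum_abs _ _).trans (Finset.sum_le_sum fun s hs => ?_)
    rw [abs_mul, abs_of_nonneg (le_max_right (s - y) 0)]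
    exact mul_le_mul_of_nonneg_left (max_le (hy s hs) hM) (abs_nonneg _)
  calc |cvarObjective S α p y - cvarObjective S α q y|
      = 1 / (1 - α) * |∑ s ∈ S, (p s - q s) * max (s - y) 0| := by
        rw [hdiff, abs_mul, abs_of_pos hc]
    _ ≤ 1 / (1 - α) * ∑ s ∈ S, |p s - q s| * M := mul_le_mul_of_nonneg_left hsum hc.le
    _ = (M / (1 - α)) * ∑ s ∈ S, |p s - q s| := by
        rw [← Finset.sum_mul]
        ring

end Objective

theorem abs_finCVaR_sub_le (S : Finset ℝ) (hS : S.Nonempty) {α : ℝ} (hα : α < 1)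
    (p q : ℝ → ℝ) :
    |finCVaR S hS α p - finCVaR S hS α q| ≤
      ((S.max' hS - S.min' hS) / (1 - α)) * ∑ s ∈ S, |p s - q s| := by
  have hLU : S.min' hS ≤ S.max' hS := S.min'_le _ (S.max'_mem hS)
  have hK : IsCompact (Set.Icc (S.min' hS) (S.max' hS)) := isCompact_Icc
  rw [finCVaR_eq_sInf_cvarObjective, finCVaR_eq_sInf_cvarObjective]
  refine abs_csInf_image_sub_csInf_image_le (Set.nonempty_Icc.mpr hLU)
    (hK.bddBelow_image (continuous_cvarObjective S α p).continuousOn)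
    (hK.bddBelow_image (continuous_cvarObjective S α q).continuousOn) fun y hy => ?_
  exact abs_cvarObjective_sub_le S hα p q (sub_nonneg.mpr hLU)
    fun s hs => sub_le_sub (S.le_max' s hs) hy.1

theorem cvar_continuous_in_distribution_general (S : Finset ℝ) (hS : S.Nonempty)
    (α : ℝ) (hα : α ∈ Set.Ioo (0 : ℝ) 1)
    (p : ℕ → ℝ → ℝ) (q : ℝ → ℝ)
    (hconv : ∀ s ∈ S, Tendsto (fun t => p t s) atTop (nhds (q s))) :
    Tendsto (fun t => finCVaR S hS α (p t)) atTop (nhds (finCVaR S hS α q)) ∧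
    ∀ t, |finCVaR S hS α (p t) - finCVaR S hS α q| ≤
      ((S.max' hS - S.min' hS) / (1 - α)) * ∑ s ∈ S, |p t s - q s| := by
  have hbound := fun t => abs_finCVaR_sub_le S hS hα.2 (p t) q
  refine ⟨?_, hbound⟩
  have hdist : Tendsto (fun t => ∑ s ∈ S, |p t s - q s|) atTop (nhds 0) := by
    simpa using tendsto_finsetSum S fun s hs => ((hconv s hs).sub_const (q s)).abs
  rw [tendsto_iff_norm_sub_tendsto_zero]
  exact squeeze_zero (fun _ => norm_nonneg _) (fun t => (Real.norm_eq_abs _).trans_le (hbound t))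
    (by simpa using hdist.const_mul ((S.max' hS - S.min' hS) / (1 - α)))

theorem cvar_continuous_in_distribution (S : Finset ℝ) (hS : S.Nonempty)
    (α : ℝ) (hα : α ∈ Set.Ioo (0 : ℝ) 1)
    (p : ℕ → ℝ → ℝ) (q : ℝ → ℝ)
    (hp : ∀ t, (∀ s ∈ S, 0 ≤ p t s) ∧ ∑ s ∈ S, p t s = 1)
    (hq : (∀ s ∈ S, 0 ≤ q s) ∧ ∑ s ∈ S, q s = 1)
    (hconv : ∀ s ∈ S, Tendsto (fun t => p t s) atTop (nhds (q s))) :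
    Tendsto (fun t => finCVaR S hS α (p t)) atTop (nhds (finCVaR S hS α q)) ∧
    ∀ t, |finCVaR S hS α (p t) - finCVaR S hS α q| ≤
      ((S.max' hS - S.min' hS) / (1 - α)) * ∑ s ∈ S, |p t s - q s| :=
  cvar_continuous_in_distribution_general S hS α hα p q hconv
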